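/- Let V be a real vector space and P : V^k → ℝ a symmetric k-multilinear map. For elements X, A, B, C in V and real t, the function f(t) = P(X, Y(t), ..., Y(t)) with Y(t) = (1-t)A - (1/2)t(1-t)B + tC (the last k-1 arguments all equal to Y(t)) satisfies: ∫₀¹ f(t) dt = Σ_{i=0}^{k-1} Σ_{j=0}^{k-i-1} ((k-1)!/(i! j! (k-i-j-1)!)) · (-1/2)^i · ((k-j-1)!(i+j)!/(k+i)!) · P(X, B^i, A^j, C^{k-i-j-1}), where B^i denotes i arguments equal to B, etc. -/

import Mathlib

/-!
Write `Y(t) = b(t) • B + a(t) • A + c(t) • C` with `b = -t(1-t)/2`, `a = 1 - t`, `c = t`.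
Expanding `P(X, Y, …, Y)` by multilinearity gives one term for each way of placing `B`, `A` or `C`
in each of the `k - 1` slots; by symmetry such a term only depends on how many slots get each
vector, and `i` copies of `B` and `j` copies of `A` can be placed in
`(k-1)! / (i! j! (k-1-i-j)!)` ways. Their coefficient `b^i a^j c^(k-1-i-j)` equals
`(-1/2)^i t^(k-1-j) (1-t)^(i+j)`, whose integral over `[0, 1]` is a Beta value.
-/

open Finset

theorem Equiv.Perm.exists_comp_eq_of_card_fiber_eq {α ι : Type*} [Fintype α] [DecidableEq ι]
    {χ χ' : α → ι} (h : ∀ c, #{a | χ a = c} = #{a | χ' a = c}) :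
    ∃ σ : Equiv.Perm α, χ ∘ σ = χ' := by
  have fiber (c : ι) : {a // χ' a = c} ≃ {a // χ a = c} :=
    Fintype.equivOfCardEq (by rw [Fintype.card_subtype, Fintype.card_subtype, h])
  refine ⟨(Equiv.sigmaFiberEquiv χ').symm.trans
    ((Equiv.sigmaCongrRight fiber).trans (Equiv.sigmaFiberEquiv χ)), funext fun a => ?_⟩
  exact (fiber (χ' a) ⟨a, rfl⟩).2

theorem Finset.sum_sum_powerset_compl_eq {ι N : Type*} [Fintype ι] [DecidableEq ι]
    [AddCommMonoid N] (F : ℕ → ℕ → N) :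
    ∑ s : Finset ι, ∑ u ∈ sᶜ.powerset, F #s #u =
      ∑ i ∈ range (Fintype.card ι + 1), ∑ j ∈ range (Fintype.card ι + 1 - i),
        ((Fintype.card ι).choose i * (Fintype.card ι - i).choose j) • F i j := by
  rw [← powerset_univ, sum_powerset, card_univ]
  refine sum_congr rfl fun i hi => ?_
  have hin : i ≤ Fintype.card ι := Nat.lt_succ_iff.mp (mem_range.mp hi)
  calc ∑ s ∈ powersetCard i univ, ∑ u ∈ sᶜ.powerset, F #s #u
      = ∑ s ∈ powersetCard i (univ : Finset ι), ∑ j ∈ range (Fintype.card ι + 1 - i),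
          (Fintype.card ι - i).choose j • F i j := by
        refine sum_congr rfl fun s hs => ?_
        rw [(mem_powersetCard.mp hs).2, sum_powerset, card_compl, (mem_powersetCard.mp hs).2,
          Nat.sub_add_comm hin]
        refine sum_congr rfl fun j _ => ?_
        rw [sum_congr rfl fun u hu => by rw [(mem_powersetCard.mp hu).2], sum_const,
          card_powersetCard, card_compl, (mem_powersetCard.mp hs).2]
    _ = _ := by
        rw [sum_const, card_powersetCard, card_univ, smul_sum]
        simp_rw [mul_smul]

def blockVec {α : Type*} {n : ℕ} (i j : ℕ) (x y z : α) : Fin n → α :=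
  fun l => if l.val < i then x else if l.val < i + j then y else z

theorem blockVec_smul {R M : Type*} [SMul R M] {n : ℕ} (i j : ℕ) (a b c : R) (x y z : M) :
    (blockVec i j (a • x) (b • y) (c • z) : Fin n → M) =
      fun l => blockVec i j a b c l • blockVec i j x y z l := by
  funext l
  simp only [blockVec]
  split_ifs <;> rfl

theorem prod_blockVec {M : Type*} [CommMonoid M] {n i j : ℕ} (hij : i + j ≤ n) (a b c : M) :
    ∏ l : Fin n, blockVec i j a b c l = a ^ i * b ^ j * c ^ (n - i - j) := by
  unfold blockVec
  rw [Fin.prod_univ_eq_prod_range (fun m => if m < i then a else if m < i + j then b else c),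
    ← prod_range_mul_prod_Ico _ hij, ← prod_range_mul_prod_Ico _ (Nat.le_add_right i j),
    prod_congr rfl fun m hm => if_pos (mem_range.mp hm),
    prod_congr rfl fun m hm => (if_neg (mem_Ico.mp hm).1.not_gt).trans (if_pos (mem_Ico.mp hm).2),
    prod_congr rfl fun m hm => (if_neg (by grind)).trans (if_neg (mem_Ico.mp hm).1.not_gt)]
  simp [Nat.sub_sub]

theorem exists_blockVec_eq_piecewise {α : Type*} {n i j : ℕ} (hij : i + j ≤ n) (x y z : α) :
    ∃ s u : Finset (Fin n), Disjoint s u ∧ #s = i ∧ #u = j ∧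
      blockVec i j x y z = u.piecewise (fun _ => y) (s.piecewise (fun _ => x) (fun _ => z)) := by
  set below : ℕ → Finset (Fin n) := fun m => univ.filter fun l => l.val < m
  have hsub : below i ⊆ below (i + j) := monotone_filter_right _ fun _ _ _ => by omega
  refine ⟨below i, below (i + j) \ below i, disjoint_sdiff, ?_, ?_, ?_⟩
  · rw [Fin.card_filter_val_lt]; omega
  · rw [card_sdiff_of_subset hsub, Fin.card_filter_val_lt, Fin.card_filter_val_lt]; omega
  · funext l
    simp only [blockVec, piecewise, below, mem_sdiff, mem_filter, mem_univ, true_and]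
    split_ifs <;> first | rfl | omega

section Symmetric

variable {R M N ι : Type*} [CommSemiring R] [AddCommMonoid M] [Module R M]
  [AddCommMonoid N] [Module R N] [Fintype ι] [DecidableEq ι]

-- Labels rather than the vectors themselves, since `x`, `y`, `z` may coincide.
def piecewiseLabel (s u : Finset ι) (l : ι) : Fin 3 :=
  if l ∈ u then 1 else if l ∈ s then 0 else 2

theorem card_piecewiseLabel_fiber {s u : Finset ι} (hsu : Disjoint s u) (c : Fin 3) :
    #{l | piecewiseLabel s u l = c} = ![#s, #u, Fintype.card ι - #s - #u] c := by
  have hsu' := disjoint_left.mp hsu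
  fin_cases c
  · congr 1; ext l; simp [piecewiseLabel]; grind
  · congr 1; ext l; simp [piecewiseLabel]; grind
  · simp only [Fin.reduceFinMk, Matrix.cons_val]
    rw [Nat.sub_sub, ← card_union_of_disjoint hsu, ← card_compl]
    congr 1; ext l; simp [piecewiseLabel]; grind

theorem MultilinearMap.map_piecewise_piecewise_of_symm
    (f : MultilinearMap R (fun _ : ι => M) N) (hf : ∀ v (σ : Equiv.Perm ι), f (v ∘ σ) = f v)
    (x y z : M) {s u s' u' : Finset ι} (hsu : Disjoint s u) (hsu' : Disjoint s' u')
    (hs : #s = #s') (hu : #u = #u') :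
    f (u.piecewise (fun _ => y) (s.piecewise (fun _ => x) (fun _ => z))) =
      f (u'.piecewise (fun _ => y) (s'.piecewise (fun _ => x) (fun _ => z))) := by
  have hlabel (s u : Finset ι) : u.piecewise (fun _ => y) (s.piecewise (fun _ => x) (fun _ => z)) =
      ![x, y, z] ∘ piecewiseLabel s u := by
    funext l; simp only [piecewise, piecewiseLabel, Function.comp_apply]; split_ifs <;> rfl
  obtain ⟨σ, hσ⟩ := Equiv.Perm.exists_comp_eq_of_card_fiber_eq (χ := piecewiseLabel s u)
    (χ' := piecewiseLabel s' u') fun c => by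
      rw [card_piecewiseLabel_fiber hsu, card_piecewiseLabel_fiber hsu', hs, hu]
  rw [hlabel, hlabel, ← hσ, ← Function.comp_assoc, hf]

theorem MultilinearMap.map_add_add_eq_sum_piecewise (f : MultilinearMap R (fun _ : ι => M) N)
    (x y z : M) :
    f (fun _ => x + y + z) = ∑ s : Finset ι, ∑ u ∈ sᶜ.powerset,
      f (u.piecewise (fun _ => y) (s.piecewise (fun _ => x) (fun _ => z))) := by
  simp_rw [add_assoc]
  rw [← Pi.add_def, f.map_add_univ]
  refine sum_congr rfl fun s _ => ?_
  rw [← f.map_piecewise_add]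
  congr 1; funext l
  by_cases hl : l ∈ s <;> simp [hl]

theorem MultilinearMap.curryLeft_apply_comp_perm {n : ℕ}
    (f : MultilinearMap R (fun _ : Fin (n + 1) => M) N)
    (hf : ∀ v (σ : Equiv.Perm (Fin (n + 1))), f (v ∘ σ) = f v) (x : M) (v : Fin n → M)
    (σ : Equiv.Perm (Fin n)) : f.curryLeft x (v ∘ σ) = f.curryLeft x v := by
  simp only [curryLeft_apply]
  convert hf (Fin.cons x v) (Equiv.Perm.decomposeFin.symm (0, σ)) using 2
  funext l
  cases l using Fin.cases <;> simp

variable {n : ℕ} (f : MultilinearMap R (fun _ : Fin n => M) N)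

theorem MultilinearMap.map_add_add_of_symm
    (hf : ∀ v (σ : Equiv.Perm (Fin n)), f (v ∘ σ) = f v) (x y z : M) :
    f (fun _ => x + y + z) = ∑ i ∈ Finset.range (n + 1), ∑ j ∈ Finset.range (n + 1 - i),
      (n.choose i * (n - i).choose j) • f (blockVec i j x y z) := by
  rw [f.map_add_add_eq_sum_piecewise]
  have hblock (s : Finset (Fin n)) (u) (hu : u ∈ sᶜ.powerset) :
      f (u.piecewise (fun _ => y) (s.piecewise (fun _ => x) (fun _ => z))) =
        f (blockVec #s #u x y z) := by
    have hsu : Disjoint s u := disjoint_of_subset_right (mem_powerset.mp hu) disjoint_compl_right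
    have hcard : #s + #u ≤ n := by
      simpa [card_union_of_disjoint hsu] using card_le_univ (s ∪ u)
    obtain ⟨s', u', hsu', hs, hu', hvec⟩ := exists_blockVec_eq_piecewise hcard x y z
    rw [hvec]
    exact f.map_piecewise_piecewise_of_symm hf x y z hsu hsu' hs.symm hu'.symm
  rw [sum_congr rfl fun s _ => sum_congr rfl (hblock s),
    sum_sum_powerset_compl_eq (fun i j => f (blockVec i j x y z)), Fintype.card_fin]

theorem MultilinearMap.map_smul_add_smul_add_smul_of_symm
    (hf : ∀ v (σ : Equiv.Perm (Fin n)), f (v ∘ σ) = f v) (a b c : R) (x y z : M) :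
    f (fun _ => a • x + b • y + c • z) =
      ∑ i ∈ Finset.range (n + 1), ∑ j ∈ Finset.range (n + 1 - i),
        (n.choose i * (n - i).choose j) • (a ^ i * b ^ j * c ^ (n - i - j)) •
          f (blockVec i j x y z) := by
  rw [f.map_add_add_of_symm hf]
  refine sum_congr rfl fun i hi => sum_congr rfl fun j hj => ?_
  have hij : i + j ≤ n := by have := mem_range.mp hi; have := mem_range.mp hj; omega
  rw [blockVec_smul, f.map_smul_univ, prod_blockVec hij]

end Symmetric

theorem cast_choose_mul_choose {n i j : ℕ} (hij : i + j ≤ n) :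
    ((n.choose i * (n - i).choose j : ℕ) : ℝ) =
      n.factorial / (i.factorial * j.factorial * (n - i - j).factorial) := by
  rw [Nat.cast_mul, Nat.cast_choose ℝ (by omega : i ≤ n),
    Nat.cast_choose ℝ (by omega : j ≤ n - i)]
  field_simp

theorem integral_pow_mul_one_sub_pow (a b : ℕ) :
    ∫ t in (0:ℝ)..1, t ^ a * (1 - t) ^ b =
      (a.factorial * b.factorial : ℝ) / (a + b + 1).factorial := by
  have hGamma := Complex.Gamma_mul_Gamma_eq_betaIntegral (s := a + 1) (t := b + 1)
    (by norm_cast; positivity) (by norm_cast; positivity)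
  have hbeta : Complex.betaIntegral (a + 1) (b + 1) =
      ((∫ t in (0:ℝ)..1, t ^ a * (1 - t) ^ b : ℝ) : ℂ) := by
    rw [Complex.betaIntegral, ← intervalIntegral.integral_ofReal]
    refine intervalIntegral.integral_congr fun t _ => ?_
    push_cast
    simp only [add_sub_cancel_right, Complex.cpow_natCast]
  rw [hbeta, show (a + 1 : ℂ) + (b + 1) = (a + b + 1 : ℕ) + 1 by push_cast; ring] at hGamma
  simp only [Complex.Gamma_nat_eq_factorial] at hGamma
  rw [eq_div_iff (by positivity)]
  exact_mod_cast (hGamma.trans (mul_comm _ _)).symm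

theorem integral_expansion_coefficient {n i j : ℕ} (hij : i + j ≤ n) :
    ∫ t in (0:ℝ)..1, (-(1 / 2) * t * (1 - t)) ^ i * (1 - t) ^ j * t ^ (n - i - j) =
      (-(1 / 2)) ^ i * ((n - j).factorial * (i + j).factorial / (n + 1 + i).factorial) := by
  have hweight (t : ℝ) : (-(1 / 2) * t * (1 - t)) ^ i * (1 - t) ^ j * t ^ (n - i - j) =
      (-(1 / 2)) ^ i * (t ^ (n - j) * (1 - t) ^ (i + j)) := by
    rw [show n - j = i + (n - i - j) by omega, mul_pow, mul_pow]
    ring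
  simp_rw [hweight]
  rw [intervalIntegral.integral_const_mul, integral_pow_mul_one_sub_pow,
    show n - j + (i + j) + 1 = n + 1 + i by omega]

theorem johnson_expansion {V : Type*} [NormedAddCommGroup V] [NormedSpace ℝ V]
    (k : ℕ) (hk : 1 ≤ k)
    (P : ContinuousMultilinearMap ℝ (fun _ : Fin k => V) ℝ)
    (hsymm : ∀ (v : Fin k → V) (σ : Equiv.Perm (Fin k)), P (v ∘ σ) = P v)
    (X A B C : V) :
    (∫ t in (0:ℝ)..1,
        P (fun l => if l.val = 0 then X
          else (1 - t) • A - ((1/2) * t * (1 - t)) • B + t • C)) =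
      ∑ i ∈ Finset.range k, ∑ j ∈ Finset.range (k - i),
        ((Nat.factorial (k - 1) : ℝ) /
            (Nat.factorial i * Nat.factorial j * Nat.factorial (k - i - j - 1))) *
          (-(1/2)) ^ i *
          ((Nat.factorial (k - j - 1) * Nat.factorial (i + j) : ℝ) / Nat.factorial (k + i)) *
          P (fun l => if l.val = 0 then X
            else if l.val ≤ i then B else if l.val ≤ i + j then A else C) := by
  obtain ⟨n, rfl⟩ : ∃ n, k = n + 1 := ⟨k - 1, by omega⟩
  set f := P.toMultilinearMap.curryLeft X
  have hf := P.toMultilinearMap.curryLeft_apply_comp_perm hsymm X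
  have hcons {v : Fin n → V} {w : Fin (n + 1) → V} (hw : w = Fin.cons X v) : P w = f v :=
    hw ▸ rfl
  have integrand (t : ℝ) :
      P (fun l => if l.val = 0 then X else (1 - t) • A - ((1/2) * t * (1 - t)) • B + t • C) =
        ∑ i ∈ range (n + 1), ∑ j ∈ range (n + 1 - i),
          (-(1 / 2) * t * (1 - t)) ^ i * (1 - t) ^ j * t ^ (n - i - j) *
            ((n.choose i * (n - i).choose j : ℕ) * f (blockVec i j B A C)) := by
    rw [hcons (v := fun _ => (-(1 / 2) * t * (1 - t)) • B + (1 - t) • A + t • C) (by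
      funext l; cases l using Fin.cases <;> simp; module),
      f.map_smul_add_smul_add_smul_of_symm hf]
    simp only [nsmul_eq_mul, smul_eq_mul]
    refine sum_congr rfl fun i _ => sum_congr rfl fun j _ => by ring
  simp only [integrand]
  rw [intervalIntegral.integral_finsetSum fun i _ =>
    (by fun_prop : Continuous _).intervalIntegrable _ _]
  refine sum_congr rfl fun i hi => ?_
  rw [intervalIntegral.integral_finsetSum fun j _ =>
    (by fun_prop : Continuous _).intervalIntegrable _ _]
  refine sum_congr rfl fun j hj => ?_
  have hij : i + j ≤ n := by have := mem_range.mp hi; have := mem_range.mp hj; omega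
  rw [intervalIntegral.integral_mul_const, integral_expansion_coefficient hij,
    cast_choose_mul_choose hij, hcons (v := blockVec i j B A C) (by
      funext l; cases l using Fin.cases <;> simp [blockVec]),
    show n + 1 - 1 = n by omega, show n + 1 - i - j - 1 = n - i - j by omega,
    show n + 1 - j - 1 = n - j by omega]
  ring
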